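/- arXiv:1906.03362 — 5 statements merged into one kernel-verified Lean document; each statement's English description precedes it below -/
import Mathlib

section
/- Let U_1, ..., U_n be i.i.d. chi-squared random variables with one degree of freedom and let a_1, ..., a_n be nonnegative weights with each a_i ≤ 1. Then for every t > 0, P( Σ_i a_i (U_i − 1) ≥ 2√(n t) + 2t ) ≤ exp(−t). -/
open MeasureTheory ProbabilityTheory Real
open scoped ENNReal NNReal

/-- The chi-squared distribution with one degree of freedom: the law of the square of a
standard normal random variable. -/
noncomputable def chiSqOne : Measure ℝ := (gaussianReal 0 1).map (fun x => x ^ 2)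

section Aux

lemma gauss_eq : gaussianReal 0 1 =
    volume.withDensity (fun x => ((Real.toNNReal (gaussianPDFReal 0 1 x) : ℝ≥0) : ℝ≥0∞)) := by
  rw [gaussianReal_of_var_ne_zero _ one_ne_zero]
  rfl

lemma pdf_eq (x : ℝ) : gaussianPDFReal 0 1 x = (Real.sqrt (2 * π))⁻¹ * rexp (-(1/2) * x^2) := by
  unfold gaussianPDFReal
  push_cast
  rw [mul_one, sub_zero]
  congr 1
  ring

lemma smul_pdf_eq {s : ℝ} :
    (fun x : ℝ => (Real.toNNReal (gaussianPDFReal 0 1 x) : ℝ≥0) • rexp (s * x ^ 2))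
      = fun x => (Real.sqrt (2 * π))⁻¹ * rexp (-(1/2 - s) * x^2) := by
  ext x
  rw [NNReal.smul_def, Real.coe_toNNReal _ (gaussianPDFReal_nonneg _ _ _), smul_eq_mul,
    pdf_eq, mul_assoc, ← Real.exp_add]
  ring_nf

lemma integrable_exp_sq_gauss {s : ℝ} (hs : s < 1/2) :
    Integrable (fun x => rexp (s * x ^ 2)) (gaussianReal 0 1) := by
  rw [gauss_eq, integrable_withDensity_iff_integrable_smul
    (measurable_gaussianPDFReal 0 1).real_toNNReal, smul_pdf_eq]
  exact (integrable_exp_neg_mul_sq (by linarith)).const_mul _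

lemma integral_exp_sq_gauss {s : ℝ} (hs : s < 1/2) :
    ∫ x, rexp (s * x ^ 2) ∂(gaussianReal 0 1) = (Real.sqrt (1 - 2*s))⁻¹ := by
  rw [gauss_eq, integral_withDensity_eq_integral_smul
    (measurable_gaussianPDFReal 0 1).real_toNNReal, smul_pdf_eq, integral_const_mul,
    integral_gaussian]
  rw [show π / (1/2 - s) = 2 * π * (1 - 2*s)⁻¹ by field_simp]
  rw [Real.sqrt_mul (show (0:ℝ) ≤ 2 * π by positivity) ((1 - 2*s)⁻¹), Real.sqrt_inv,
    ← mul_assoc, inv_mul_cancel₀ (by positivity), one_mul]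

lemma integrable_exp_chiSq {s : ℝ} (hs : s < 1/2) :
    Integrable (fun x => rexp (s * x)) chiSqOne := by
  unfold chiSqOne
  rw [integrable_map_measure (Continuous.aestronglyMeasurable (by continuity))
    (continuous_pow 2).measurable.aemeasurable]
  exact integrable_exp_sq_gauss hs

lemma integral_exp_chiSq {s : ℝ} (hs : s < 1/2) :
    ∫ x, rexp (s * x) ∂chiSqOne = (Real.sqrt (1 - 2*s))⁻¹ := by
  unfold chiSqOne
  rw [integral_map (continuous_pow 2).measurable.aemeasurable
    (Continuous.aestronglyMeasurable (by continuity))]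
  exact integral_exp_sq_gauss hs

lemma log_ineq {x : ℝ} (h0 : 0 ≤ x) (h1 : x < 1) :
    -Real.log (1-x) ≤ x + x^2/(2*(1-x)) := by
  set f : ℝ → ℝ := fun y => y + y^2/(2*(1-y)) + Real.log (1-y) with hf
  have key : ∀ y ∈ Set.Ico (0:ℝ) 1, HasDerivAt f (y^2/(2*(1-y)^2)) y := by
    intro y hy
    have hy1 : (1:ℝ) - y > 0 := by simp [Set.mem_Ico] at hy; linarith [hy.2]
    have h1' : HasDerivAt (fun y : ℝ => y^2) (2*y) y := by
      simpa using hasDerivAt_pow 2 y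
    have h2' : HasDerivAt (fun y : ℝ => 2*(1-y)) (-2) y := by
      simpa using ((hasDerivAt_id y).const_sub 1).const_mul 2
    have hdiv : HasDerivAt (fun y : ℝ => y^2/(2*(1-y)))
        ((2*y * (2*(1-y)) - y^2 * (-2)) / (2*(1-y))^2) y :=
      h1'.div h2' (by positivity)
    have hlog : HasDerivAt (fun y : ℝ => Real.log (1-y)) ((1-y)⁻¹ * (-1)) y :=
      (Real.hasDerivAt_log hy1.ne').comp y (((hasDerivAt_id y).const_sub 1))
    have := ((hasDerivAt_id y).add hdiv).add hlog
    refine this.congr_deriv ?_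
    field_simp
    ring
  have hcont : ContinuousOn f (Set.Icc 0 x) := by
    intro y hy
    exact ((key y ⟨hy.1, lt_of_le_of_lt hy.2 h1⟩).continuousAt).continuousWithinAt
  have hmono : MonotoneOn f (Set.Icc 0 x) := by
    apply monotoneOn_of_deriv_nonneg (convex_Icc 0 x) hcont
    · intro y hy
      rw [interior_Icc] at hy
      exact ((key y ⟨hy.1.le, lt_of_lt_of_le hy.2 h1.le⟩).differentiableAt).differentiableWithinAt
    · intro y hy
      rw [interior_Icc] at hy
      rw [(key y ⟨hy.1.le, lt_of_lt_of_le hy.2 h1.le⟩).deriv]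
      positivity
  have h00 : f 0 = 0 := by simp [hf]
  have := hmono (Set.left_mem_Icc.mpr h0) (Set.right_mem_Icc.mpr h0) h0
  rw [h00] at this
  simp only [hf] at this
  linarith

section Aff
variable {Ω : Type*} [MeasurableSpace Ω] {μ : Measure Ω} [IsProbabilityMeasure μ]
  {V : Ω → ℝ} (hV : Measurable V) (hlaw : μ.map V = chiSqOne) {c s : ℝ}

omit [MeasurableSpace Ω] in
lemma exp_aff_eq (c s : ℝ) : (fun ω => rexp (s * (c * (V ω - 1))))
    = fun ω => rexp (-(s*c)) * rexp ((s*c) * V ω) := by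
  ext ω; rw [← Real.exp_add]; ring_nf

omit [IsProbabilityMeasure μ] in
include hV hlaw in
lemma integrable_exp_aff (hcs : s * c < 1/2) :
    Integrable (fun ω => rexp (s * (c * (V ω - 1)))) μ := by
  have h0 : Integrable (fun x => rexp ((s*c) * x)) (μ.map V) := by
    rw [hlaw]; exact integrable_exp_chiSq hcs
  have h1 : Integrable (fun ω => rexp ((s*c) * V ω)) μ :=
    (integrable_map_measure (Continuous.aestronglyMeasurable (by continuity))
      hV.aemeasurable).mp h0
  rw [exp_aff_eq]
  exact h1.const_mul _

include hV hlaw in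
lemma mgf_aff (hcs : s * c < 1/2) :
    mgf (fun ω => c * (V ω - 1)) μ s = rexp (-(s*c)) * (Real.sqrt (1 - 2*(s*c)))⁻¹ := by
  have hmap := integral_map (μ := μ) (φ := V) (f := fun x => rexp (s * c * x))
    hV.aemeasurable (Continuous.aestronglyMeasurable (by continuity))
  rw [mgf, exp_aff_eq, integral_const_mul, ← hmap, hlaw]
  rw [show (fun x : ℝ => rexp (s * c * x)) = fun x => rexp ((s*c) * x) from rfl,
    integral_exp_chiSq hcs]

end Aff

lemma factor_bound {u L : ℝ} (hu0 : 0 ≤ u) (huL : u ≤ L) (hL : L < 1/2) :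
    rexp (-u) * (Real.sqrt (1 - 2*u))⁻¹ ≤ rexp (L^2/(1-2*L)) := by
  have h12u : (0:ℝ) < 1 - 2*u := by linarith
  have h12L : (0:ℝ) < 1 - 2*L := by linarith
  rw [Real.sqrt_eq_rpow, Real.rpow_def_of_pos h12u, ← Real.exp_neg, ← Real.exp_add,
    Real.exp_le_exp]
  have hlog : -Real.log (1-2*u) ≤ 2*u + 2*(u^2/(1-2*u)) := by
    have := log_ineq (by linarith : (0:ℝ) ≤ 2*u) (by linarith : 2*u < 1)
    have heq : (2*u)^2/(2*(1-2*u)) = 2*(u^2/(1-2*u)) := by field_simp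
    linarith [heq ▸ this]
  have hmono : u^2/(1-2*u) ≤ L^2/(1-2*L) :=
    div_le_div₀ (by positivity) (by nlinarith) h12L (by linarith)
  nlinarith [hlog, hmono]

end Aux

/-- Laurent–Massart upper tail bound for nonnegative linear combinations of centered
chi-squared(1) random variables with weights in `[0,1]`. -/
theorem laurent_massart_upper_tail
    {Ω : Type*} [MeasurableSpace Ω] {μ : Measure Ω} [IsProbabilityMeasure μ]
    {n : ℕ} (U : Fin n → Ω → ℝ)
    (hUmeas : ∀ i, Measurable (U i))
    (hUindep : iIndepFun U μ)
    (hUlaw : ∀ i, μ.map (U i) = chiSqOne)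
    (a : Fin n → ℝ) (ha0 : ∀ i, 0 ≤ a i) (ha1 : ∀ i, a i ≤ 1)
    (t : ℝ) (ht : 0 < t) :
    μ {ω | 2 * Real.sqrt (n * t) + 2 * t ≤ ∑ i, a i * (U i ω - 1)} ≤
      ENNReal.ofReal (Real.exp (-t)) := by
  rcases Nat.eq_zero_or_pos n with hn | hn
  · subst hn
    have hset : {ω : Ω | 2 * Real.sqrt ((0:ℕ) * t) + 2 * t ≤ ∑ i : Fin 0, a i * (U i ω - 1)}
        = ∅ := by
      ext ω
      simp only [Set.mem_setOf_eq, Set.mem_empty_iff_false, iff_false, not_le,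
        Finset.univ_eq_empty, Finset.sum_empty, Nat.cast_zero, zero_mul, Real.sqrt_zero]
      linarith
    rw [hset, measure_empty]
    exact zero_le
  -- main case
  have hn' : (0:ℝ) < n := by exact_mod_cast hn
  set r : ℝ := Real.sqrt (t / n) with hr_def
  have hr : 0 < r := Real.sqrt_pos.mpr (by positivity)
  have h2r : (0:ℝ) < 1 + 2 * r := by linarith
  set lam : ℝ := r / (1 + 2 * r) with hlam_def
  have hlam0 : 0 < lam := by positivity
  have hlam2 : lam < 1/2 := by rw [hlam_def, div_lt_iff₀ h2r]; linarith
  have hrsq : (n:ℝ) * r ^ 2 = t := by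
    rw [hr_def, Real.sq_sqrt (by positivity)]
    field_simp
  have hsqrtnt : Real.sqrt ((n:ℝ) * t) = (n:ℝ) * r := by
    rw [← hrsq, show (n:ℝ) * ((n:ℝ) * r^2) = ((n:ℝ)*r)^2 by ring,
      Real.sqrt_sq (by positivity)]
  set ε : ℝ := 2 * Real.sqrt ((n:ℝ) * t) + 2 * t with hε_def
  set X : Fin n → Ω → ℝ := fun i ω => a i * (U i ω - 1) with hX_def
  have hXmeas : ∀ i, Measurable (X i) := fun i =>
    (measurable_const.mul ((hUmeas i).sub measurable_const))
  have hXindep : iIndepFun X μ := by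
    exact hUindep.comp (fun i => fun u => a i * (u - 1))
      (fun i => measurable_const.mul (measurable_id.sub measurable_const))
  have hcs : ∀ i, lam * a i < 1/2 := fun i =>
    lt_of_le_of_lt (by nlinarith [ha0 i, ha1 i, hlam0.le] : lam * a i ≤ lam) hlam2
  have hint : ∀ i ∈ Finset.univ, Integrable (fun ω => rexp (lam * X i ω)) μ := by
    intro i _
    exact integrable_exp_aff (hUmeas i) (hUlaw i) (hcs i)
  have hintsum : Integrable (fun ω => rexp (lam * (∑ i, X i) ω)) μ :=
    hXindep.integrable_exp_mul_sum hXmeas hint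
  -- Chernoff
  have hchern := measure_ge_le_exp_mul_mgf (μ := μ) (X := ∑ i, X i) ε hlam0.le hintsum
  -- mgf bound
  have hmgf : mgf (∑ i, X i) μ lam = ∏ i, mgf (X i) μ lam := hXindep.mgf_sum hXmeas _
  have hfac : ∀ i, mgf (X i) μ lam ≤ rexp (lam^2/(1-2*lam)) := by
    intro i
    rw [show X i = fun ω => a i * (U i ω - 1) from rfl,
      mgf_aff (hUmeas i) (hUlaw i) (hcs i)]
    exact factor_bound (mul_nonneg hlam0.le (ha0 i))
      (by nlinarith [ha0 i, ha1 i, hlam0.le]) hlam2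
  have hprod : mgf (∑ i, X i) μ lam ≤ rexp ((n:ℝ) * (lam^2/(1-2*lam))) := by
    rw [hmgf]
    calc ∏ i, mgf (X i) μ lam ≤ ∏ _i : Fin n, rexp (lam^2/(1-2*lam)) :=
          Finset.prod_le_prod (fun i _ => mgf_nonneg) (fun i _ => hfac i)
      _ = rexp ((n:ℝ) * (lam^2/(1-2*lam))) := by
          simp [Finset.prod_const, ← Real.exp_nat_mul]
  -- exponent computation
  have hexp : -lam * ε + (n:ℝ) * (lam^2/(1-2*lam)) = -t := by
    rw [hε_def, hsqrtnt, ← hrsq, hlam_def]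
    have h12 : 1 - 2 * (r / (1 + 2*r)) = (1 + 2*r)⁻¹ := by field_simp; ring
    rw [h12]
    field_simp
    ring
  have hfinal : (μ {ω | ε ≤ (∑ i, X i) ω}).toReal ≤ rexp (-t) := by
    calc (μ {ω | ε ≤ (∑ i, X i) ω}).toReal ≤ rexp (-lam * ε) * mgf (∑ i, X i) μ lam := hchern
      _ ≤ rexp (-lam * ε) * rexp ((n:ℝ) * (lam^2/(1-2*lam))) := by
          exact mul_le_mul_of_nonneg_left hprod (Real.exp_nonneg _)
      _ = rexp (-lam * ε + (n:ℝ) * (lam^2/(1-2*lam))) := (Real.exp_add _ _).symm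
      _ = rexp (-t) := by rw [hexp]
  have hset : {ω | 2 * Real.sqrt (n * t) + 2 * t ≤ ∑ i, a i * (U i ω - 1)}
      = {ω | ε ≤ (∑ i, X i) ω} := by
    ext ω
    simp only [Set.mem_setOf_eq, hε_def, hX_def, Finset.sum_apply]
  rw [hset, ← ENNReal.ofReal_toReal (measure_ne_top μ _)]
  exact ENNReal.ofReal_le_ofReal hfinal
end

section
/- Let H be a symmetric d × d matrix partitioned according to index sets S and N (a partition of {1,...,d}) such that H_SS is invertible, and suppose the mutual incoherence condition ||H_NS H_SS^{-1}||_∞ ≤ 1 − α holds for some α ∈ (0,1). Let g ∈ R^d, z_S ∈ R^{|S|} with ||z_S||_∞ ≤ 1, and λ > 0, and define z_N := −(1/λ)[g_N + H_NS H_SS^{-1}(−g_S − λ z_S)]. If ||g||_∞ ≤ αλ/2, then ||z_N||_∞ < 1. -/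
open Matrix

/-- The induced `ℓ∞ → ℓ∞` operator norm of a matrix: the maximum absolute row sum. -/
noncomputable def matInfNorm {m n : Type*} [Fintype m] [Fintype n]
    (M : Matrix m n ℝ) : ℝ := ⨆ i, ∑ j, |M i j|

/-- Strict dual feasibility (primal–dual witness, zero remainder): under mutual incoherence
`‖H_NS H_SS⁻¹‖_∞ ≤ 1 − α` and the bound `‖g‖_∞ ≤ αλ/2`, the dual vector
`z_N := −(1/λ)[g_N + H_NS H_SS⁻¹(−g_S − λ z_S)]` satisfies `‖z_N‖_∞ < 1`. -/
theorem strict_dual_feasibility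
    {d : ℕ} (H : Matrix (Fin d) (Fin d) ℝ) (hsym : H.IsSymm)
    (S : Finset (Fin d))
    (HSS : Matrix {j : Fin d // j ∈ S} {j : Fin d // j ∈ S} ℝ)
    (HNS : Matrix {j : Fin d // j ∉ S} {j : Fin d // j ∈ S} ℝ)
    (hHSS : HSS = H.submatrix Subtype.val Subtype.val)
    (hHNS : HNS = H.submatrix Subtype.val Subtype.val)
    (hSSinv : IsUnit HSS.det)
    (α : ℝ) (hα0 : 0 < α) (hα1 : α < 1)
    (hincoh : matInfNorm (HNS * HSS⁻¹) ≤ 1 - α)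
    (lam : ℝ) (hlam : 0 < lam)
    (g : Fin d → ℝ) (hg : ‖g‖ ≤ α * lam / 2)
    (zS : {j : Fin d // j ∈ S} → ℝ) (hzS : ‖zS‖ ≤ 1)
    (zN : {j : Fin d // j ∉ S} → ℝ)
    (hzN : zN = fun i => -(1 / lam) *
      ((fun i : {j : Fin d // j ∉ S} => g i.1) i +
        (HNS.mulVec (HSS⁻¹.mulVec (fun j => -g j.1 - lam * zS j))) i)) :
    ‖zN‖ < 1 := by
  set M := HNS * HSS⁻¹ with hM
  set v : {j : Fin d // j ∈ S} → ℝ := fun j => -g j.1 - lam * zS j with hv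
  set C : ℝ := α * lam / 2 + lam with hC
  have hC0 : 0 ≤ C := by positivity
  have hvC : ∀ j, |v j| ≤ C := by
    intro j
    have hgj : |g j.1| ≤ α * lam / 2 := le_trans (norm_le_pi_norm g j.1) hg
    have hzj : |zS j| ≤ 1 := le_trans (norm_le_pi_norm zS j) hzS
    have : |v j| ≤ |g j.1| + lam * |zS j| := by
      have h1 : |v j| ≤ |(-g j.1)| + |lam * zS j| := abs_sub _ _
      rw [abs_neg, abs_mul, abs_of_pos hlam] at h1
      exact h1
    rw [hC]
    nlinarith [mul_le_mul_of_nonneg_left hzj hlam.le]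
  have hrow : ∀ i, ∑ j, |M i j| ≤ 1 - α := by
    intro i
    have h1 : ∑ j, |M i j| ≤ matInfNorm M := by
      unfold matInfNorm
      exact le_ciSup (f := fun i => ∑ j, |M i j|) (Set.Finite.bddAbove (Set.finite_range _)) i
    exact h1.trans hincoh
  rw [pi_norm_lt_iff one_pos]
  intro i
  have hmv : |M.mulVec v i| ≤ (1 - α) * C := by
    calc |M.mulVec v i| = |∑ j, M i j * v j| := rfl
      _ ≤ ∑ j, |M i j * v j| := Finset.abs_sum_le_sum_abs _ _
      _ = ∑ j, |M i j| * |v j| := by simp [abs_mul]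
      _ ≤ ∑ j, |M i j| * C := by
          apply Finset.sum_le_sum
          intro j _
          exact mul_le_mul_of_nonneg_left (hvC j) (abs_nonneg _)
      _ = (∑ j, |M i j|) * C := by rw [Finset.sum_mul]
      _ ≤ (1 - α) * C := mul_le_mul_of_nonneg_right (hrow i) hC0
  have hgi : |g i.1| ≤ α * lam / 2 := le_trans (norm_le_pi_norm g i.1) hg
  have hrw : HNS.mulVec (HSS⁻¹.mulVec v) i = M.mulVec v i := by
    rw [hM, ← Matrix.mulVec_mulVec]
  rw [hzN]
  simp only [Real.norm_eq_abs]
  rw [hrw, abs_mul, abs_neg, abs_of_pos (by positivity : (0:ℝ) < 1 / lam)]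
  have habs : |g i.1 + M.mulVec v i| ≤ α * lam / 2 + (1 - α) * C :=
    le_trans (abs_add_le _ _) (add_le_add hgi hmv)
  have hfin : (1 / lam) * (α * lam / 2 + (1 - α) * C) < 1 := by
    rw [div_mul_eq_mul_div, one_mul, div_lt_one hlam]
    nlinarith [sq_nonneg α, mul_pos hα0 hlam]
  calc 1 / lam * |g i.1 + M.mulVec v i| ≤ 1 / lam * (α * lam / 2 + (1 - α) * C) :=
        mul_le_mul_of_nonneg_left habs (by positivity)
    _ < 1 := hfin
end

section
/- Let F : R^d → R be convex and differentiable, λ > 0, and consider the objective J(θ) := F(θ) + λ ||θ||_1. Suppose θ̂ is a minimizer of J with corresponding subgradient ẑ ∈ ∂||θ̂||_1 satisfying ∇F(θ̂) + λ ẑ = 0, and suppose |ẑ_j| < 1 for all j in an index set N. Then every minimizer θ̃ of J satisfies θ̃_j = 0 for all j ∈ N. -/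
/-- The basic gradient inequality for a convex differentiable function. -/
lemma convex_grad_ineq {d : ℕ} (F : (Fin d → ℝ) → ℝ)
    (hFconv : ConvexOn ℝ Set.univ F) (hFdiff : Differentiable ℝ F)
    (x y : Fin d → ℝ) :
    F x + fderiv ℝ F x (y - x) ≤ F y := by
  set v := y - x with hv
  set g : ℝ → ℝ := fun t => F (x + t • v) with hg
  have hgconv : ConvexOn ℝ Set.univ g := by
    refine ⟨convex_univ, fun s _ t _ a b ha hb hab => ?_⟩
    have hb' : b = 1 - a := by linarith
    subst hb'
    have h1 : x + (a * s + (1 - a) * t) • v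
        = a • (x + s • v) + (1 - a) • (x + t • v) := by module
    show F (x + (a * s + (1 - a) * t) • v)
        ≤ a * F (x + s • v) + (1 - a) * F (x + t • v)
    rw [h1]
    exact hFconv.2 (Set.mem_univ _) (Set.mem_univ _) ha hb hab
  have hd : HasDerivAt g (fderiv ℝ F x v) 0 := by
    have h1 : HasDerivAt (fun t : ℝ => x + t • v) v 0 := by
      simpa using (((hasDerivAt_id (0:ℝ)).smul_const v).const_add x)
    have h2 : HasFDerivAt F (fderiv ℝ F x) (x + (0:ℝ) • v) := by
      simpa using (hFdiff x).hasFDerivAt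
    exact h2.comp_hasDerivAt 0 h1
  have hslope := hgconv.le_slope_of_hasDerivAt (Set.mem_univ 0) (Set.mem_univ 1)
    one_pos hd
  have : fderiv ℝ F x v ≤ g 1 - g 0 := by
    simpa [slope_def_field] using hslope
  have hg0 : g 0 = F x := by simp [hg]
  have hg1 : g 1 = F y := by simp [hg, hv]
  rw [hg0, hg1] at this
  linarith

/-- Primal–dual witness support lemma: if `θ̂` minimizes `J(θ) = F(θ) + λ‖θ‖₁` for a convex
differentiable `F`, with a subgradient `ẑ ∈ ∂‖θ̂‖₁` satisfying the stationarity condition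
`∇F(θ̂) + λ ẑ = 0` and `|ẑ_j| < 1` for all `j ∈ N`, then every minimizer `θ̃` of `J`
satisfies `θ̃_j = 0` for all `j ∈ N`. -/
theorem l1_minimizer_support
    {d : ℕ} (F : (Fin d → ℝ) → ℝ)
    (hFconv : ConvexOn ℝ Set.univ F)
    (hFdiff : Differentiable ℝ F)
    (lam : ℝ) (hlam : 0 < lam)
    (θhat zhat : Fin d → ℝ)
    (hmin : ∀ θ, F θhat + lam * ∑ j, |θhat j| ≤ F θ + lam * ∑ j, |θ j|)
    (hsubgrad_sign : ∀ j, θhat j ≠ 0 → zhat j = Real.sign (θhat j))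
    (hsubgrad_bdd : ∀ j, |zhat j| ≤ 1)
    (hstat : ∀ j, fderiv ℝ F θhat (Pi.single j 1) + lam * zhat j = 0)
    (N : Set (Fin d)) (hN : ∀ j ∈ N, |zhat j| < 1) :
    ∀ θtilde : Fin d → ℝ,
      (∀ θ, F θtilde + lam * ∑ j, |θtilde j| ≤ F θ + lam * ∑ j, |θ j|) →
      ∀ j ∈ N, θtilde j = 0 := by
  intro θtilde hmin' j hj
  set D := fderiv ℝ F θhat with hD
  -- linearity: D v = ∑ j, v j * D (e_j)
  have hDsum : ∀ v : Fin d → ℝ, D v = ∑ i, v i * D (Pi.single i 1) := by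
    intro v
    have hv : v = ∑ i, Pi.single i (v i) := (Finset.univ_sum_single v).symm
    calc D v = D (∑ i, Pi.single i (v i)) := by rw [← hv]
    _ = ∑ i, D (Pi.single i (v i)) := map_sum D _ _
    _ = ∑ i, v i * D (Pi.single i 1) := by
        refine Finset.sum_congr rfl fun i _ => ?_
        have hps : Pi.single i (v i) = (v i) • (Pi.single i 1 : Fin d → ℝ) := by
          ext k
          rcases eq_or_ne k i with rfl | h
          · simp
          · simp [Pi.single_apply, h]
        rw [hps, map_smul, smul_eq_mul]
  have hDe : ∀ i, D (Pi.single i 1) = -(lam * zhat i) := fun i => by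
    have := hstat i; linarith
  -- gradient inequality
  have hgrad := convex_grad_ineq F hFconv hFdiff θhat θtilde
  have hDval : D (θtilde - θhat) = ∑ i, (θtilde i - θhat i) * (-(lam * zhat i)) := by
    rw [hDsum]
    exact Finset.sum_congr rfl fun i _ => by rw [hDe i]; rfl
  -- |θhat| sum equals ∑ zhat * θhat
  have habs_hat : ∀ i, zhat i * θhat i = |θhat i| := by
    intro i
    rcases eq_or_ne (θhat i) 0 with h0 | h0
    · simp [h0]
    · rw [hsubgrad_sign i h0]
      rcases lt_trichotomy (θhat i) 0 with h | h | h
      · rw [Real.sign_of_neg h, abs_of_neg h]; ring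
      · exact absurd h h0
      · rw [Real.sign_of_pos h, abs_of_pos h]; ring
  -- equal objective values
  have heq : F θtilde + lam * ∑ i, |θtilde i| = F θhat + lam * ∑ i, |θhat i| :=
    le_antisymm (hmin' θhat) (hmin θtilde)
  -- key inequality: ∑ |θtilde i| ≤ ∑ zhat i * θtilde i
  have hkey : ∑ i, |θtilde i| ≤ ∑ i, zhat i * θtilde i := by
    have h1 : F θhat + D (θtilde - θhat) ≤ F θtilde := hgrad
    have h2 : D (θtilde - θhat) =
        -lam * (∑ i, zhat i * θtilde i) + lam * ∑ i, |θhat i| := by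
      rw [hDval]
      have : ∑ i, (θtilde i - θhat i) * (-(lam * zhat i))
          = -lam * (∑ i, zhat i * θtilde i) + lam * (∑ i, zhat i * θhat i) := by
        rw [Finset.mul_sum, Finset.mul_sum, ← Finset.sum_add_distrib]
        exact Finset.sum_congr rfl fun i _ => by ring
      rw [this]
      congr 1
      rw [Finset.sum_congr rfl fun i _ => habs_hat i]
    nlinarith [hmin θtilde, hmin' θhat]
  -- termwise: zhat i * θtilde i ≤ |θtilde i|
  have hterm : ∀ i : Fin d, zhat i * θtilde i ≤ |θtilde i| := by
    intro i
    calc zhat i * θtilde i ≤ |zhat i * θtilde i| := le_abs_self _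
    _ = |zhat i| * |θtilde i| := abs_mul _ _
    _ ≤ 1 * |θtilde i| := by
        exact mul_le_mul_of_nonneg_right (hsubgrad_bdd i) (abs_nonneg _)
    _ = |θtilde i| := one_mul _
  -- hence termwise equality
  have hsum0 : ∑ i, (|θtilde i| - zhat i * θtilde i) = 0 := by
    have hle : ∑ i, (|θtilde i| - zhat i * θtilde i) ≤ 0 := by
      rw [Finset.sum_sub_distrib]; linarith
    have hge : 0 ≤ ∑ i, (|θtilde i| - zhat i * θtilde i) :=
      Finset.sum_nonneg fun i _ => by linarith [hterm i]
    linarith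
  have hj0 : |θtilde j| - zhat j * θtilde j = 0 := by
    have := (Finset.sum_eq_zero_iff_of_nonneg
      (fun i _ => by linarith [hterm i])).mp hsum0 j (Finset.mem_univ j)
    exact this
  by_contra hne
  have habs : 0 < |θtilde j| := abs_pos.mpr hne
  have : zhat j * θtilde j ≤ |zhat j| * |θtilde j| :=
    (le_abs_self _).trans (le_of_eq (abs_mul _ _))
  have hlt : |zhat j| * |θtilde j| < 1 * |θtilde j| :=
    mul_lt_mul_of_pos_right (hN j hj) habs
  linarith
end

section
/- In the setting of the previous statement, if additionally the restriction of the Hessian ∇²F(θ̂) to the coordinates S := {1,...,d} \ N is positive definite, then the minimizer of J(θ) = F(θ) + λ||θ||_1 is unique. -/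
open Filter Set Topology

private lemma grad_ineq_aux' {E : Type*} [NormedAddCommGroup E] [NormedSpace ℝ E] {F : E → ℝ}
    (hFconv : ConvexOn ℝ Set.univ F) (hdiff : Differentiable ℝ F)
    (x y : E) :
    F x + fderiv ℝ F x (y - x) ≤ F y := by
  set v := y - x with hv
  have h1 : HasDerivAt (fun t : ℝ => x + t • v) v 0 := by
    simpa using ((hasDerivAt_id (0:ℝ)).smul_const v).const_add x
  have h0 : HasDerivAt (fun t : ℝ => F (x + t • v)) (fderiv ℝ F x v) 0 := by
    have h2 := (hdiff (x + (0:ℝ) • v)).hasFDerivAt.comp_hasDerivAt 0 h1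
    simp only [zero_smul, add_zero] at h2; exact h2
  have key : ∀ t ∈ Set.Ioc (0:ℝ) 1, slope (fun t : ℝ => F (x + t • v)) 0 t ≤ F y - F x := by
    intro t ht
    have hc := hFconv.2 (Set.mem_univ x) (Set.mem_univ y)
      (show (0:ℝ) ≤ 1 - t by linarith [ht.2]) ht.1.le (by ring)
    have hxv : (1-t) • x + t • y = x + t • v := by rw [hv]; module
    rw [hxv] at hc
    simp only [smul_eq_mul] at hc
    have h3 : slope (fun t : ℝ => F (x + t • v)) 0 t = (F (x + t • v) - F x) / t := by
      simp [slope_def_field]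
    rw [h3, div_le_iff₀ ht.1]
    nlinarith
  have htend : Filter.Tendsto (slope (fun t : ℝ => F (x + t • v)) 0) (𝓝[>] 0)
      (𝓝 (fderiv ℝ F x v)) :=
    (hasDerivAt_iff_tendsto_slope.mp h0).mono_left
      (nhdsWithin_mono _ (fun t ht => ne_of_gt ht))
  have hle : fderiv ℝ F x v ≤ F y - F x := by
    refine le_of_tendsto htend ?_
    filter_upwards [Ioc_mem_nhdsGT_of_mem (Set.left_mem_Ico.2 zero_lt_one)] with t ht
    exact key t ht
  linarith

private lemma second_deriv_aux' {E : Type*} [NormedAddCommGroup E] [NormedSpace ℝ E] {F : E → ℝ}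
    (hFsmooth : ContDiff ℝ 2 F) (θ : E) (w : E) :
    fderiv ℝ (fun x => fderiv ℝ F x w) θ
      = (ContinuousLinearMap.apply ℝ ℝ w).comp (fderiv ℝ (fderiv ℝ F) θ) := by
  have hD : HasFDerivAt (fderiv ℝ F) (fderiv ℝ (fderiv ℝ F) θ) θ := by
    have : Differentiable ℝ (fderiv ℝ F) :=
      (hFsmooth.fderiv_right (m := 1) (by norm_num)).differentiable one_ne_zero
    exact (this θ).hasFDerivAt
  exact (((ContinuousLinearMap.apply ℝ ℝ w).hasFDerivAt).comp θ hD).fderiv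

private lemma clm_sum_aux' {d : ℕ} {M : Type*} [AddCommGroup M] [Module ℝ M] [TopologicalSpace M]
    [IsTopologicalAddGroup M] [ContinuousConstSMul ℝ M]
    (L : (Fin d → ℝ) →L[ℝ] M) (u : Fin d → ℝ) :
    L u = ∑ j, u j • L (Pi.single j (1:ℝ)) := by
  have hu : u = ∑ j, u j • (Pi.single j (1:ℝ) : Fin d → ℝ) := by
    funext k
    simp [Finset.sum_apply, Pi.single_apply]
  conv_lhs => rw [hu]
  rw [map_sum]
  simp [map_smul]

private lemma sum_restrict_aux' {d : ℕ} (N : Set (Fin d)) [DecidablePred (· ∈ N)] (f : Fin d → ℝ)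
    (h : ∀ j ∈ N, f j = 0) : ∑ j, f j = ∑ j : {k : Fin d // k ∉ N}, f j := by
  classical
  rw [← Finset.sum_filter_of_ne (s := Finset.univ) (p := fun j => j ∉ N)
    (fun x _ hx hmem => hx (h x hmem))]
  exact Finset.sum_subtype _ (by simp) f

/-- Uniqueness of the ℓ1-regularized minimizer: in the primal–dual witness setting, if
additionally `F` is twice continuously differentiable and the restriction of the Hessian
`∇²F(θ̂)` to the coordinates `S = Nᶜ` is positive definite, then the minimizer of
`J(θ) = F(θ) + λ‖θ‖₁` is unique. -/
theorem l1_minimizer_unique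
    {d : ℕ} (F : (Fin d → ℝ) → ℝ)
    (hFconv : ConvexOn ℝ Set.univ F)
    (hFsmooth : ContDiff ℝ 2 F)
    (lam : ℝ) (hlam : 0 < lam)
    (θhat zhat : Fin d → ℝ)
    (hmin : ∀ θ, F θhat + lam * ∑ j, |θhat j| ≤ F θ + lam * ∑ j, |θ j|)
    (hsubgrad_sign : ∀ j, θhat j ≠ 0 → zhat j = Real.sign (θhat j))
    (hsubgrad_bdd : ∀ j, |zhat j| ≤ 1)
    (hstat : ∀ j, fderiv ℝ F θhat (Pi.single j 1) + lam * zhat j = 0)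
    (N : Set (Fin d)) [DecidablePred (· ∈ N)] (hN : ∀ j ∈ N, |zhat j| < 1)
    (hHessSS :
      (Matrix.of fun (i j : {k : Fin d // k ∉ N}) =>
        fderiv ℝ (fun x => fderiv ℝ F x (Pi.single (j : Fin d) 1)) θhat
          (Pi.single (i : Fin d) 1)).PosDef) :
    ∀ θ₁ θ₂ : Fin d → ℝ,
      (∀ θ, F θ₁ + lam * ∑ j, |θ₁ j| ≤ F θ + lam * ∑ j, |θ j|) →
      (∀ θ, F θ₂ + lam * ∑ j, |θ₂ j| ≤ F θ + lam * ∑ j, |θ j|) →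
      θ₁ = θ₂ := by
  have hdiff : Differentiable ℝ F := hFsmooth.differentiable (by norm_num)
  -- zhat pairs with θhat to give the ℓ1 norm
  have hzsum : ∑ j, zhat j * θhat j = ∑ j, |θhat j| := by
    apply Finset.sum_congr rfl
    intro j _
    rcases lt_trichotomy (θhat j) 0 with h | h | h
    · rw [hsubgrad_sign j h.ne, Real.sign_of_neg h, abs_of_neg h]; ring
    · simp [h]
    · rw [hsubgrad_sign j h.ne', Real.sign_of_pos h, abs_of_pos h]; ring
  -- the gradient at θhat in terms of zhat
  have hGe : ∀ u : Fin d → ℝ, fderiv ℝ F θhat u = -lam * ∑ j, zhat j * u j := by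
    intro u
    rw [clm_sum_aux' (fderiv ℝ F θhat) u, Finset.mul_sum]
    apply Finset.sum_congr rfl
    intro j _
    have hj : fderiv ℝ F θhat (Pi.single j 1) = -(lam * zhat j) := by linarith [hstat j]
    rw [smul_eq_mul, hj]; ring
  -- characterization of minimizers
  have hmin_char : ∀ ρ : Fin d → ℝ,
      (∀ θ', F ρ + lam * ∑ j, |ρ j| ≤ F θ' + lam * ∑ j, |θ' j|) →
      (∀ j ∈ N, ρ j = 0) ∧ F ρ = F θhat + fderiv ℝ F θhat (ρ - θhat) := by
    intro ρ hρ
    have hJeq : F ρ + lam * ∑ j, |ρ j| = F θhat + lam * ∑ j, |θhat j| :=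
      le_antisymm (hρ θhat) (hmin ρ)
    have hgi := grad_ineq_aux' hFconv hdiff θhat ρ
    have hG : fderiv ℝ F θhat (ρ - θhat) = -lam * ((∑ j, zhat j * ρ j) - ∑ j, |θhat j|) := by
      rw [hGe]
      congr 1
      rw [← hzsum, ← Finset.sum_sub_distrib]
      apply Finset.sum_congr rfl
      intro j _
      simp [mul_sub]
    have hterm : ∀ j, zhat j * ρ j ≤ |ρ j| := by
      intro j
      calc zhat j * ρ j ≤ |zhat j * ρ j| := le_abs_self _
        _ = |zhat j| * |ρ j| := abs_mul _ _
        _ ≤ 1 * |ρ j| := mul_le_mul_of_nonneg_right (hsubgrad_bdd j) (abs_nonneg _)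
        _ = |ρ j| := one_mul _
    have hsum_le : ∑ j, zhat j * ρ j ≤ ∑ j, |ρ j| := Finset.sum_le_sum fun j _ => hterm j
    have hsum_ge : ∑ j, |ρ j| ≤ ∑ j, zhat j * ρ j := by
      have hmul : lam * ∑ j, |ρ j| ≤ lam * ∑ j, zhat j * ρ j := by linarith
      exact (mul_le_mul_iff_right₀ hlam).mp hmul
    have hsum_eq : ∑ j, zhat j * ρ j = ∑ j, |ρ j| := le_antisymm hsum_le hsum_ge
    have hterm_eq : ∀ j, zhat j * ρ j = |ρ j| := by
      have := (Finset.sum_eq_sum_iff_of_le (fun j (_ : j ∈ Finset.univ) => hterm j)).mp hsum_eq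
      intro j; exact this j (Finset.mem_univ j)
    constructor
    · intro j hj
      by_contra hne
      have h1 : |zhat j| * |ρ j| < 1 * |ρ j| :=
        mul_lt_mul_of_pos_right (hN j hj) (abs_pos.2 hne)
      have h2 : zhat j * ρ j ≤ |zhat j| * |ρ j| := (le_abs_self _).trans (abs_mul _ _).le
      have h3 := hterm_eq j
      rw [one_mul] at h1
      linarith
    · rw [hG, hsum_eq]; linarith
  -- main claim: every minimizer equals θhat
  suffices key : ∀ θ : Fin d → ℝ,
      (∀ θ', F θ + lam * ∑ j, |θ j| ≤ F θ' + lam * ∑ j, |θ' j|) → θ = θhat by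
    intro θ₁ θ₂ h1 h2
    rw [key θ₁ h1, key θ₂ h2]
  intro θ hθ
  set v : Fin d → ℝ := θ - θhat with hv
  have hJθ : F θ + lam * ∑ j, |θ j| = F θhat + lam * ∑ j, |θhat j| :=
    le_antisymm (hθ θhat) (hmin θ)
  have hθchar := hmin_char θ hθ
  have hθhatchar := hmin_char θhat hmin
  -- every convex combination is a minimizer, so F is affine along the segment
  have hseg : ∀ t ∈ Set.Icc (0:ℝ) 1,
      F (θhat + t • v) = F θhat + t * fderiv ℝ F θhat v := by
    intro t ht
    have hlin : (1-t) • θhat + t • θ = θhat + t • v := by rw [hv]; module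
    have hFc : F (θhat + t • v) ≤ (1-t) * F θhat + t * F θ := by
      have := hFconv.2 (Set.mem_univ θhat) (Set.mem_univ θ)
        (show (0:ℝ) ≤ 1 - t by linarith [ht.2]) ht.1 (by ring)
      rw [hlin] at this
      simpa using this
    have habs : ∑ j, |(θhat + t • v) j| ≤ (1-t) * (∑ j, |θhat j|) + t * ∑ j, |θ j| := by
      rw [Finset.mul_sum, Finset.mul_sum, ← Finset.sum_add_distrib]
      apply Finset.sum_le_sum
      intro j _
      have hj : (θhat + t • v) j = (1-t) * θhat j + t * θ j := by
        simp [hv, Pi.sub_apply]; ring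
      rw [hj]
      calc |(1-t) * θhat j + t * θ j| ≤ |(1-t) * θhat j| + |t * θ j| := abs_add_le _ _
        _ = (1-t) * |θhat j| + t * |θ j| := by
            rw [abs_mul, abs_mul, abs_of_nonneg (by linarith [ht.2] : (0:ℝ) ≤ 1-t),
              abs_of_nonneg ht.1]
    have hminρ : ∀ θ', F (θhat + t • v) + lam * ∑ j, |(θhat + t • v) j|
        ≤ F θ' + lam * ∑ j, |θ' j| := by
      intro θ'
      have hcomb : F (θhat + t • v) + lam * ∑ j, |(θhat + t • v) j|
          ≤ F θhat + lam * ∑ j, |θhat j| := by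
        have h4 := mul_le_mul_of_nonneg_left habs hlam.le
        have hJt : t * (F θ + lam * ∑ j, |θ j|) = t * (F θhat + lam * ∑ j, |θhat j|) := by
          rw [hJθ]
        nlinarith [hFc, h4, hJt]
      exact hcomb.trans (hmin θ')
    have h2 := (hmin_char _ hminρ).2
    have h3 : (θhat + t • v) - θhat = t • v := by abel
    rw [h2, h3, map_smul, smul_eq_mul]
  -- the directional second derivative along v vanishes
  set D2 := fderiv ℝ (fderiv ℝ F) θhat with hD2def
  set φ : ℝ → ℝ := fun t => fderiv ℝ F (θhat + t • v) v with hφ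
  have hline : ∀ t : ℝ, HasDerivAt (fun s : ℝ => θhat + s • v) v t := by
    intro t
    simpa using ((hasDerivAt_id t).smul_const v).const_add θhat
  have hφ_const : ∀ t ∈ Set.Ico (0:ℝ) 1, φ t = fderiv ℝ F θhat v := by
    intro t ht
    rcases eq_or_lt_of_le ht.1 with h0 | h0
    · rw [hφ]; simp [← h0]
    · have hg : HasDerivAt (fun s : ℝ => F (θhat + s • v)) (φ t) t :=
        (hdiff (θhat + t • v)).hasFDerivAt.comp_hasDerivAt t (hline t)
      have haff : HasDerivAt (fun s : ℝ => F θhat + s * fderiv ℝ F θhat v)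
          (fderiv ℝ F θhat v) t := by
        simpa using ((hasDerivAt_id t).mul_const (fderiv ℝ F θhat v)).const_add (F θhat)
      have hev : (fun s : ℝ => F (θhat + s • v))
          =ᶠ[𝓝 t] (fun s => F θhat + s * fderiv ℝ F θhat v) := by
        filter_upwards [Ioo_mem_nhds h0 ht.2] with s hs
        exact hseg s ⟨hs.1.le, hs.2.le⟩
      exact hg.unique (haff.congr_of_eventuallyEq hev)
  have hD2deriv : HasDerivAt φ (D2 v v) 0 := by
    have hDdiff : Differentiable ℝ (fderiv ℝ F) :=
      (hFsmooth.fderiv_right (m := 1) (by norm_num)).differentiable one_ne_zero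
    have hΦ : HasFDerivAt (fun x => fderiv ℝ F x v)
        ((ContinuousLinearMap.apply ℝ ℝ v).comp D2) θhat :=
      ((ContinuousLinearMap.apply ℝ ℝ v).hasFDerivAt).comp θhat (hDdiff θhat).hasFDerivAt
    have hΦ0 : HasFDerivAt (fun x => fderiv ℝ F x v)
        ((ContinuousLinearMap.apply ℝ ℝ v).comp D2) (θhat + (0:ℝ) • v) := by
      simpa using hΦ
    have := hΦ0.comp_hasDerivAt 0 (hline 0)
    simp at this; exact this
  have hquad_zero : D2 v v = 0 := by
    have h1 : HasDerivWithinAt φ 0 (Set.Ico (0:ℝ) 1) 0 := by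
      apply (hasDerivWithinAt_const (0:ℝ) (Set.Ico (0:ℝ) 1) (fderiv ℝ F θhat v)).congr
      · intro s hs; exact hφ_const s hs
      · exact hφ_const 0 ⟨le_rfl, zero_lt_one⟩
    have h2 : HasDerivWithinAt φ (D2 v v) (Set.Ico (0:ℝ) 1) 0 := hD2deriv.hasDerivWithinAt
    have hu : UniqueDiffWithinAt ℝ (Set.Ico (0:ℝ) 1) 0 :=
      uniqueDiffOn_Ico 0 1 0 ⟨le_rfl, zero_lt_one⟩
    rw [← h2.derivWithin hu, h1.derivWithin hu]
  -- v is supported off N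
  have hvN : ∀ j ∈ N, v j = 0 := by
    intro j hj
    have := hθchar.1 j hj
    have h2 := hθhatchar.1 j hj
    simp [hv, Pi.sub_apply, this, h2]
  -- expand the quadratic form over the subtype
  have hexpand : D2 v v
      = ∑ i : {k : Fin d // k ∉ N}, ∑ j : {k : Fin d // k ∉ N},
          v i * (v j * D2 (Pi.single (i : Fin d) (1:ℝ)) (Pi.single (j : Fin d) (1:ℝ))) := by
    have e1 : D2 v v = ∑ i, v i * (D2 (Pi.single i (1:ℝ)) v) := by
      rw [clm_sum_aux' D2 v]
      simp [ContinuousLinearMap.sum_apply, ContinuousLinearMap.smul_apply, smul_eq_mul]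
    have e2 : ∀ i : Fin d, D2 (Pi.single i (1:ℝ)) v
        = ∑ j, v j * D2 (Pi.single i (1:ℝ)) (Pi.single j (1:ℝ)) := by
      intro i
      rw [clm_sum_aux' (D2 (Pi.single i (1:ℝ))) v]
      simp [smul_eq_mul]
    rw [e1]
    rw [sum_restrict_aux' N _ (by
      intro j hj
      simp [hvN j hj])]
    apply Finset.sum_congr rfl
    intro i _
    rw [e2]
    rw [sum_restrict_aux' N _ (by
      intro j hj
      simp [hvN j hj])]
    rw [Finset.mul_sum]
  -- relate hessian matrix entries to D2
  have hMentry : ∀ i j : {k : Fin d // k ∉ N},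
      (Matrix.of fun (i j : {k : Fin d // k ∉ N}) =>
        fderiv ℝ (fun x => fderiv ℝ F x (Pi.single (j : Fin d) 1)) θhat
          (Pi.single (i : Fin d) 1)) i j
      = D2 (Pi.single (i : Fin d) (1:ℝ)) (Pi.single (j : Fin d) (1:ℝ)) := by
    intro i j
    simp only [Matrix.of_apply]
    rw [second_deriv_aux' hFsmooth θhat (Pi.single (j : Fin d) 1)]
    rfl
  -- conclude v = 0
  have hveq : v = 0 := by
    by_contra hvne
    set x : {k : Fin d // k ∉ N} → ℝ := fun k => v k with hx
    have hxne : x ≠ 0 := by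
      intro hx0
      apply hvne
      funext j
      by_cases hj : j ∈ N
      · exact hvN j hj
      · have := congrFun hx0 ⟨j, hj⟩
        simpa [hx] using this
    have hpos := hHessSS.dotProduct_mulVec_pos hxne
    have hdot : dotProduct x ((Matrix.of fun (i j : {k : Fin d // k ∉ N}) =>
        fderiv ℝ (fun x => fderiv ℝ F x (Pi.single (j : Fin d) 1)) θhat
          (Pi.single (i : Fin d) 1)).mulVec x) = D2 v v := by
      rw [hexpand]
      simp only [dotProduct, Matrix.mulVec, dotProduct]
      apply Finset.sum_congr rfl
      intro i _
      rw [Finset.mul_sum]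
      apply Finset.sum_congr rfl
      intro j _
      rw [hMentry i j]
      simp only [hx]; ring
    simp only [star_trivial] at hpos
    rw [hdot, hquad_zero] at hpos
    exact lt_irrefl 0 hpos
  funext j
  have hj := congrFun hveq j
  rw [hv] at hj
  simp only [Pi.sub_apply, Pi.zero_apply, sub_eq_zero] at hj
  exact hj
end

section
/- Let H be a d × d matrix partitioned by index sets S, N with H_SS invertible, ||H_NS H_SS^{-1}||_∞ ≤ 1 − α for α ∈ (0,1), and ||H_SS^{-1}||_∞ ≤ C_2. Let g, R ∈ R^d, z_S with ||z_S||_∞ ≤ 1, and λ > 0. Define z_N by λ z_N = −g_N − R_N − H_NS H_SS^{-1}(−g_S − R_S − λ z_S). If ||g||_∞ ≤ αλ/4 and ||R||_∞ ≤ αλ/4, then λ||z_N||_∞ < λ, i.e., ||z_N||_∞ < 1. -/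
open Matrix

/-- Full strict dual feasibility bound with remainder term: under mutual incoherence
`‖H_NS H_SS⁻¹‖_∞ ≤ 1 − α`, `‖H_SS⁻¹‖_∞ ≤ C₂`, `‖g‖_∞ ≤ αλ/4`, and `‖R‖_∞ ≤ αλ/4`, the
dual vector defined by `λ z_N = −g_N − R_N − H_NS H_SS⁻¹(−g_S − R_S − λ z_S)` satisfies
`λ ‖z_N‖_∞ < λ`, i.e. `‖z_N‖_∞ < 1`. -/
theorem strict_dual_feasibility_with_remainder
    {d : ℕ} (H : Matrix (Fin d) (Fin d) ℝ)
    (S : Finset (Fin d))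
    (HSS : Matrix {j : Fin d // j ∈ S} {j : Fin d // j ∈ S} ℝ)
    (HNS : Matrix {j : Fin d // j ∉ S} {j : Fin d // j ∈ S} ℝ)
    (hHSS : HSS = H.submatrix Subtype.val Subtype.val)
    (hHNS : HNS = H.submatrix Subtype.val Subtype.val)
    (hSSinv : IsUnit HSS.det)
    (α : ℝ) (hα0 : 0 < α) (hα1 : α < 1)
    (hincoh : matInfNorm (HNS * HSS⁻¹) ≤ 1 - α)
    (C₂ : ℝ) (hC₂ : matInfNorm HSS⁻¹ ≤ C₂)
    (lam : ℝ) (hlam : 0 < lam)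
    (g R : Fin d → ℝ) (hg : ‖g‖ ≤ α * lam / 4) (hR : ‖R‖ ≤ α * lam / 4)
    (zS : {j : Fin d // j ∈ S} → ℝ) (hzS : ‖zS‖ ≤ 1)
    (zN : {j : Fin d // j ∉ S} → ℝ)
    (hzN : ∀ i : {j : Fin d // j ∉ S}, lam * zN i =
      -g i.1 - R i.1 -
        (HNS.mulVec (HSS⁻¹.mulVec (fun j => -g j.1 - R j.1 - lam * zS j))) i) :
    lam * ‖zN‖ < lam ∧ ‖zN‖ < 1 := by
  set M := HNS * HSS⁻¹ with hM
  set v : {j : Fin d // j ∈ S} → ℝ := fun j => -g j.1 - R j.1 - lam * zS j with hv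
  have hB : ∀ j, |v j| ≤ α * lam / 2 + lam := by
    intro j
    have h1 : |g j.1| ≤ α * lam / 4 := le_trans (norm_le_pi_norm g j.1) hg
    have h2 : |R j.1| ≤ α * lam / 4 := le_trans (norm_le_pi_norm R j.1) hR
    have h3 : |zS j| ≤ 1 := le_trans (norm_le_pi_norm zS j) hzS
    have : |v j| ≤ |g j.1| + |R j.1| + lam * |zS j| := by
      simp only [hv]
      calc |(-g j.1 - R j.1 - lam * zS j)| ≤ |(-g j.1 - R j.1)| + |lam * zS j| :=
            abs_sub _ _
        _ ≤ |g j.1| + |R j.1| + lam * |zS j| := by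
            rw [abs_mul, abs_of_pos hlam]
            gcongr
            calc |(-g j.1 - R j.1)| ≤ |(-g j.1)| + |R j.1| := abs_sub _ _
              _ = |g j.1| + |R j.1| := by rw [abs_neg]
    nlinarith
  have hrow : ∀ i : {j : Fin d // j ∉ S}, ∑ j, |M i j| ≤ 1 - α := by
    intro i
    refine le_trans ?_ hincoh
    exact le_ciSup (f := fun i : {j : Fin d // j ∉ S} => ∑ j, |M i j|)
      (Set.Finite.bddAbove (Set.finite_range _)) i
  have hrownn : ∀ i : {j : Fin d // j ∉ S}, 0 ≤ ∑ j, |M i j| :=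
    fun i => Finset.sum_nonneg fun j _ => abs_nonneg _
  have key : ∀ i : {j : Fin d // j ∉ S}, |zN i| ≤ 1 - α ^ 2 / 2 := by
    intro i
    have hmul : |(M.mulVec v) i| ≤ (∑ j, |M i j|) * (α * lam / 2 + lam) := by
      calc |(M.mulVec v) i| = |∑ j, M i j * v j| := rfl
        _ ≤ ∑ j, |M i j * v j| := Finset.abs_sum_le_sum_abs _ _
        _ ≤ ∑ j, |M i j| * (α * lam / 2 + lam) := by
            refine Finset.sum_le_sum fun j _ => ?_
            rw [abs_mul]
            exact mul_le_mul_of_nonneg_left (hB j) (abs_nonneg _)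
        _ = (∑ j, |M i j|) * (α * lam / 2 + lam) := (Finset.sum_mul _ _ _).symm
    have hm2 : |(M.mulVec v) i| ≤ (1 - α) * (α * lam / 2 + lam) := by
      refine le_trans hmul (mul_le_mul_of_nonneg_right (hrow i) ?_)
      nlinarith
    have heq : lam * zN i = -g i.1 - R i.1 - (M.mulVec v) i := by
      rw [hzN i, hM, Matrix.mulVec_mulVec]
    have h1 : |g i.1| ≤ α * lam / 4 := le_trans (norm_le_pi_norm g i.1) hg
    have h2 : |R i.1| ≤ α * lam / 4 := le_trans (norm_le_pi_norm R i.1) hR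
    have habs : |lam * zN i| ≤ |g i.1| + |R i.1| + |(M.mulVec v) i| := by
      rw [heq]
      calc |(-g i.1 - R i.1 - (M.mulVec v) i)| ≤ |(-g i.1 - R i.1)| + |(M.mulVec v) i| :=
            abs_sub _ _
        _ ≤ |g i.1| + |R i.1| + |(M.mulVec v) i| := by
            have : |(-g i.1 - R i.1)| ≤ |g i.1| + |R i.1| := by
              calc |(-g i.1 - R i.1)| ≤ |(-g i.1)| + |R i.1| := abs_sub _ _
                _ = |g i.1| + |R i.1| := by rw [abs_neg]
            linarith
    have hlz : lam * |zN i| ≤ lam * (1 - α ^ 2 / 2) := by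
      have : |lam * zN i| = lam * |zN i| := by rw [abs_mul, abs_of_pos hlam]
      nlinarith
    exact le_of_mul_le_mul_left hlz hlam
  have hc : (0:ℝ) ≤ 1 - α ^ 2 / 2 := by nlinarith
  have hnorm : ‖zN‖ ≤ 1 - α ^ 2 / 2 := by
    rw [pi_norm_le_iff_of_nonneg hc]
    intro i
    simpa [Real.norm_eq_abs] using key i
  have hzN1 : ‖zN‖ < 1 := lt_of_le_of_lt hnorm (by nlinarith)
  exact ⟨by nlinarith, hzN1⟩
end
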